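/- The twisted twin G of the Grigorchuk group is regular branch over K; that is, X*K ≤ K and Xⁿ*K has finite index in G for every n ≥ 0. Moreover K contains the third level stabilizer Stab_G(3). -/

import Mathlib

open Equiv

/-! ## The binary rooted tree and the twisted twin of the Grigorchuk group

We identify the vertex set of the infinite rooted binary tree with `V = List Bool`
(the free monoid `X*` on `X = {0,1}`), and realize automorphisms of the tree as
permutations of `V`.  The generators `a, b, c, d` of the twisted twin `G` of the
Grigorchuk group are defined by the recursive rules
`a(xw) = (¬x)w`, `ψ(b) = (c,a)`, `ψ(c) = (a,d)`, `ψ(d) = (1,b)`. -/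

abbrev V : Type := List Bool

def actA : V → V
  | [] => []
  | x :: w => (!x) :: w

theorem actA_invol : Function.Involutive actA := fun w => by
  cases w with
  | nil => rfl
  | cons x w => simp [actA]

mutual
  def actB : V → V
    | [] => []
    | false :: w => false :: actC w
    | true :: w => true :: actA w
  def actC : V → V
    | [] => []
    | false :: w => false :: actA w
    | true :: w => true :: actD w
  def actD : V → V
    | [] => []
    | false :: w => false :: w
    | true :: w => true :: actB w
end

theorem act_invol3 (w : V) :
    actB (actB w) = w ∧ actC (actC w) = w ∧ actD (actD w) = w := by
  induction w with
  | nil => exact ⟨rfl, rfl, rfl⟩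
  | cons x w ih =>
    cases x <;>
      exact ⟨by simp [actB, actC, actD, ih.1, ih.2.1, ih.2.2, actA_invol w],
        by simp [actB, actC, actD, ih.1, ih.2.1, ih.2.2, actA_invol w],
        by simp [actB, actC, actD, ih.1, ih.2.1, ih.2.2, actA_invol w]⟩

theorem actB_invol : Function.Involutive actB := fun w => (act_invol3 w).1
theorem actC_invol : Function.Involutive actC := fun w => (act_invol3 w).2.1
theorem actD_invol : Function.Involutive actD := fun w => (act_invol3 w).2.2

/-- The generator `a`: the root swap. -/
def a : Perm V := actA_invol.toPerm actA
/-- The generator `b`, with `ψ(b) = (c, a)`. -/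
def b : Perm V := actB_invol.toPerm actB
/-- The generator `c`, with `ψ(c) = (a, d)`. -/
def c : Perm V := actC_invol.toPerm actC
/-- The generator `d`, with `ψ(d) = (1, b)`. -/
def d : Perm V := actD_invol.toPerm actD

@[simp] theorem coe_a : ⇑a = actA := rfl
@[simp] theorem coe_b : ⇑b = actB := rfl
@[simp] theorem coe_c : ⇑c = actC := rfl
@[simp] theorem coe_d : ⇑d = actD := rfl

/-- The twisted twin of the Grigorchuk group. -/
def G : Subgroup (Perm V) := Subgroup.closure {a, b, c, d}

theorem a_mem_G : a ∈ G := Subgroup.subset_closure (by simp)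
theorem b_mem_G : b ∈ G := Subgroup.subset_closure (by simp)
theorem c_mem_G : c ∈ G := Subgroup.subset_closure (by simp)
theorem d_mem_G : d ∈ G := Subgroup.subset_closure (by simp)

/-- `hasState g v s` says that the state (section) of `g` at the vertex `v` is `s`,
i.e. `g (v ++ w) = g v ++ s w` for all `w`. -/
def hasState (g : Perm V) (v : V) (s : Perm V) : Prop :=
  ∀ w : V, g (v ++ w) = g v ++ s w

def vstarFun (v : V) (f : V → V) : V → V :=
  fun w => if v <+: w then v ++ f (w.drop v.length) else w

theorem vstarFun_comp (v : V) (f f' : V → V) (w : V) :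
    vstarFun v f (vstarFun v f' w) = vstarFun v (f ∘ f') w := by
  by_cases h : v <+: w
  · obtain ⟨t, rfl⟩ := h
    simp [vstarFun, List.prefix_append, List.drop_left]
  · simp [vstarFun, h]

theorem vstarFun_id (v w : V) : vstarFun v id w = w := by
  by_cases h : v <+: w
  · obtain ⟨t, rfl⟩ := h
    simp [vstarFun, List.prefix_append, List.drop_left]
  · simp [vstarFun, h]

/-- `vstar v g` is the automorphism `v * g`, acting as `g` on the subtree rooted
at `v` and trivially elsewhere. -/
def vstar (v : V) (g : Perm V) : Perm V where
  toFun := vstarFun v g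
  invFun := vstarFun v g.symm
  left_inv := fun w => by
    rw [vstarFun_comp, Equiv.symm_comp_self]
    exact vstarFun_id v w
  right_inv := fun w => by
    rw [vstarFun_comp, Equiv.self_comp_symm]
    exact vstarFun_id v w

/-- `XstarSub n H` is the subgroup `Xⁿ * H`: the product of the copies `v * H`
over all vertices `v` of level `n` (equivalently, the subgroup they generate). -/
def XstarSub (n : ℕ) (H : Subgroup (Perm V)) : Subgroup (Perm V) :=
  Subgroup.closure {p | ∃ v : V, ∃ g : Perm V, v.length = n ∧ g ∈ H ∧ p = vstar v g}

/-- `pairPerm s₀ s₁ = ψ⁻¹(s₀, s₁)`: the first-level stabilizer element whose states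
at the vertices `0` and `1` are `s₀` and `s₁`. -/
def pairPerm (s₀ s₁ : Perm V) : Perm V := vstar [false] s₀ * vstar [true] s₁

/-- The permutations fixing every vertex of level `n`. -/
def stabLevel (n : ℕ) : Subgroup (Perm V) where
  carrier := {g : Perm V | ∀ v : V, v.length = n → g v = v}
  one_mem' := fun _ _ => rfl
  mul_mem' := by
    intro g h hg hh v hv
    show g (h v) = v
    rw [hh v hv, hg v hv]
  inv_mem' := by
    intro g hg v hv
    show g⁻¹ v = v
    conv_lhs => rw [← hg v hv]
    exact Equiv.symm_apply_apply g v

/-- The `n`-th level stabilizer `Stab_G(n)` of `G`. -/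
def stabG (n : ℕ) : Subgroup (Perm V) := G ⊓ stabLevel n

/-- The commutator `[x, y] = x⁻¹ y⁻¹ x y` (paper convention). -/
def pc (x y : Perm V) : Perm V := x⁻¹ * y⁻¹ * x * y
/-- Conjugation `xʸ = y⁻¹ x y`. -/
def cj (x y : Perm V) : Perm V := y⁻¹ * x * y

/-- The normal closure in `G` of a subset `S` of `G`. -/
def ncl (S : Set (Perm V)) : Subgroup (Perm V) :=
  Subgroup.closure {x | ∃ s ∈ S, ∃ g ∈ G, x = g⁻¹ * s * g}

/-- `K = ⟨[a,b],[b,c],[b,d],[c,d], bcd⟩^G`. -/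
def K : Subgroup (Perm V) := ncl {pc a b, pc b c, pc b d, pc c d, b * c * d}

/-- The subgroup `[K, G]`. -/
def KG : Subgroup (Perm V) := ⁅K, G⁆

/-- The subgroup `C`, generated by `[K,G]` and `[a,b][b,c]`. -/
def Csub : Subgroup (Perm V) := KG ⊔ Subgroup.closure {pc a b * pc b c}

/-- `γ_n(G)`, the `n`-th term of the lower central series of `G` (starting at `γ₁ = G`),
viewed as a subgroup of `Perm V`. -/
def gammaG (n : ℕ) : Subgroup (Perm V) :=
  Subgroup.map G.subtype ((⊤ : Subgroup ↥G).lowerCentralSeries (n - 1))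

/-!
Modulo `K` the generator `b` is a central involution and `d ≡ bc`. Hence `[b,d]`, `[d,bᵃ]`,
`[d,c]`, `[bᵃ,c]` and `d bᵃ c` lie in `K`; their images under `ψ` are `(1,x)` for the five normal
generators `x` of `K`. Every `g ∈ G` is the second coordinate of `ψ(h)` for some `h ∈ Stab_G(1)`,
so conjugating gives `1 × K ≤ ψ(K)`, i.e. `X*K ≤ K`.

Next `ψ((ac)⁴) = ((da)², (ad)²) ≡ ψ(a[a,b]²a)` modulo `K × K`, so `(ac)⁴ ∈ K`. Thus `G/K` is
generated by the involutions `ā, c̄` with `(āc̄)⁴ = 1` and the central involution `b̄`, and every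
element of `G` lies in one of the 16 cosets `b^δ (ac)^k a^ε K`. On the third level `K` acts through
the 8 permutations induced by `⟨[a,b],[b,d]⟩`, and a finite check shows that no nontrivial coset
representative composed with one of them fixes the third level; hence `Stab_G(3) ≤ K`. Finally
`Stab_G(n+3) ≤ Xⁿ*K` by induction through `ψ`, and level stabilizers have finite index.
-/

@[simp] theorem a_mul_self : a * a = 1 := Equiv.ext actA_invol
@[simp] theorem b_mul_self : b * b = 1 := Equiv.ext actB_invol
@[simp] theorem c_mul_self : c * c = 1 := Equiv.ext actC_invol
@[simp] theorem d_mul_self : d * d = 1 := Equiv.ext actD_invol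

@[simp] theorem a_inv : a⁻¹ = a := inv_eq_of_mul_eq_one_right a_mul_self
@[simp] theorem b_inv : b⁻¹ = b := inv_eq_of_mul_eq_one_right b_mul_self
@[simp] theorem c_inv : c⁻¹ = c := inv_eq_of_mul_eq_one_right c_mul_self
@[simp] theorem d_inv : d⁻¹ = d := inv_eq_of_mul_eq_one_right d_mul_self

theorem length_actA (v : V) : (actA v).length = v.length := by
  cases v <;> rfl

theorem length_actB_actC_actD (v : V) :
    (actB v).length = v.length ∧ (actC v).length = v.length ∧ (actD v).length = v.length := by
  induction v with
  | nil => exact ⟨rfl, rfl, rfl⟩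
  | cons x w ih =>
    cases x <;> simp [actB, actC, actD, ih.1, ih.2.1, ih.2.2, length_actA]

theorem length_apply_of_mem_G {g : Perm V} (hg : g ∈ G) (v : V) : (g v).length = v.length := by
  induction hg using Subgroup.closure_induction generalizing v with
  | mem x hx =>
    rcases hx with rfl | rfl | rfl | rfl
    exacts [length_actA v, (length_actB_actC_actD v).1, (length_actB_actC_actD v).2.1,
      (length_actB_actC_actD v).2.2]
  | one => rfl
  | mul x y _ _ hx hy => rw [Perm.mul_apply, hx, hy]
  | inv x _ hx => simpa using (hx (x⁻¹ v)).symm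

section vstar

theorem vstar_apply (v : V) (g : Perm V) (w : V) :
    vstar v g w = if v <+: w then v ++ g (w.drop v.length) else w := rfl

theorem vstar_nil (g : Perm V) : vstar [] g = g :=
  Equiv.ext fun w => by simp [vstar_apply]

def vstarHom (v : V) : Perm V →* Perm V where
  toFun := vstar v
  map_one' := Equiv.ext (vstarFun_id v)
  map_mul' g h := Equiv.ext fun w => (vstarFun_comp v g h w).symm

@[simp] theorem vstar_one (v : V) : vstar v 1 = 1 := map_one (vstarHom v)

theorem vstar_cons (x : Bool) (v : V) (g : Perm V) :
    vstar (x :: v) g = vstar [x] (vstar v g) := by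
  ext w
  rcases w with _ | ⟨y, t⟩
  · simp [vstar_apply]
  · by_cases hxy : x = y <;> by_cases hvt : v <+: t <;> simp [vstar_apply, hxy, hvt]

theorem vstar_singleton_apply (x : Bool) (g : Perm V) (y : Bool) (t : V) :
    vstar [x] g (y :: t) = if x = y then y :: g t else y :: t := by
  by_cases h : x = y <;> simp [vstar_apply, h]

end vstar

section pairPerm

@[simp] theorem pairPerm_apply_cons (s t : Perm V) (x : Bool) (v : V) :
    pairPerm s t (x :: v) = x :: (if x then t v else s v) := by
  cases x <;> simp [pairPerm, vstar_singleton_apply]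

theorem ext_of_apply_cons {g h : Perm V} (hnil : g [] = h [])
    (hcons : ∀ x v, g (x :: v) = h (x :: v)) : g = h :=
  Equiv.ext fun w => by cases w <;> simp [hnil, hcons]

theorem pairPerm_mul (s t u w : Perm V) :
    pairPerm s t * pairPerm u w = pairPerm (s * u) (t * w) :=
  ext_of_apply_cons rfl fun x v => by cases x <;> simp

@[simp] theorem pairPerm_one : pairPerm 1 1 = 1 :=
  ext_of_apply_cons rfl fun x v => by cases x <;> simp

theorem pairPerm_inv (s t : Perm V) : (pairPerm s t)⁻¹ = pairPerm s⁻¹ t⁻¹ :=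
  inv_eq_of_mul_eq_one_right (by simp [pairPerm_mul])

theorem vstar_false (g : Perm V) : vstar [false] g = pairPerm g 1 := by
  simp [pairPerm]

theorem vstar_true (g : Perm V) : vstar [true] g = pairPerm 1 g := by
  simp [pairPerm]

theorem a_mul_pairPerm (s t : Perm V) : a * pairPerm s t = pairPerm t s * a :=
  ext_of_apply_cons rfl fun x v => by cases x <;> simp [actA]

theorem a_mul_pairPerm_mul_a (s t : Perm V) : a * pairPerm s t * a = pairPerm t s := by
  rw [a_mul_pairPerm, mul_assoc, a_mul_self, mul_one]

theorem b_eq_pairPerm : b = pairPerm c a :=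
  ext_of_apply_cons rfl fun x v => by cases x <;> rfl

theorem c_eq_pairPerm : c = pairPerm a d :=
  ext_of_apply_cons rfl fun x v => by cases x <;> rfl

theorem d_eq_pairPerm : d = pairPerm 1 b :=
  ext_of_apply_cons rfl fun x v => by cases x <;> rfl

theorem a_mul_b_mul_a : a * b * a = pairPerm a c := by
  rw [b_eq_pairPerm, a_mul_pairPerm_mul_a]

theorem a_mul_c_mul_a : a * c * a = pairPerm d a := by
  rw [c_eq_pairPerm, a_mul_pairPerm_mul_a]

theorem pairPerm_mul_b (s t : Perm V) : pairPerm s t * b = pairPerm (s * c) (t * a) := by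
  rw [b_eq_pairPerm, pairPerm_mul]

theorem pairPerm_mul_c (s t : Perm V) : pairPerm s t * c = pairPerm (s * a) (t * d) := by
  rw [c_eq_pairPerm, pairPerm_mul]

theorem pairPerm_mul_d (s t : Perm V) : pairPerm s t * d = pairPerm s (t * b) := by
  rw [d_eq_pairPerm, pairPerm_mul, mul_one]

theorem pairPerm_mul_aba (s t : Perm V) :
    pairPerm s t * (a * b * a) = pairPerm (s * a) (t * c) := by
  rw [a_mul_b_mul_a, pairPerm_mul]

theorem pairPerm_mul_aca (s t : Perm V) :
    pairPerm s t * (a * c * a) = pairPerm (s * d) (t * a) := by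
  rw [a_mul_c_mul_a, pairPerm_mul]

-- `ψ` of a word is computed by absorbing its letters one at a time into `ψ⁻¹(1,1)`.
theorem pc_a_b_eq : pc a b = pairPerm (a * c) (c * a) := by
  rw [show pc a b = pairPerm 1 1 * (a * b * a) * b by simp [pc, mul_assoc]]
  simp only [pairPerm_mul_b, pairPerm_mul_aba, one_mul]

theorem a_mul_c_sq : (a * c) ^ 2 = pairPerm (d * a) (a * d) := by
  rw [show (a * c) ^ 2 = pairPerm 1 1 * (a * c * a) * c by simp [sq, mul_assoc]]
  simp only [pairPerm_mul_c, pairPerm_mul_aca, one_mul]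

theorem pairPerm_one_pc_a_b : pairPerm 1 (pc a b) = pc b d := by
  rw [show pc b d = pairPerm 1 1 * b * d * b * d by simp [pc, mul_assoc]]
  simp only [pairPerm_mul_b, pairPerm_mul_d]
  simp [pc, mul_assoc]

theorem pairPerm_one_pc_b_c : pairPerm 1 (pc b c) = pc d (a * b * a) := by
  rw [show pc d (a * b * a) = pairPerm 1 1 * d * (a * b * a) * d * (a * b * a) by
    simp [pc, mul_assoc]]
  simp only [pairPerm_mul_d, pairPerm_mul_aba]
  simp [pc, mul_assoc]

theorem pairPerm_one_pc_b_d : pairPerm 1 (pc b d) = pc d c := by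
  rw [show pc d c = pairPerm 1 1 * d * c * d * c by simp [pc, mul_assoc]]
  simp only [pairPerm_mul_c, pairPerm_mul_d]
  simp [pc, mul_assoc]

theorem pairPerm_one_pc_c_d : pairPerm 1 (pc c d) = pc (a * b * a) c := by
  rw [show pc (a * b * a) c = pairPerm 1 1 * (a * b * a) * c * (a * b * a) * c by
    simp [pc, mul_assoc]]
  simp only [pairPerm_mul_c, pairPerm_mul_aba]
  simp [pc, mul_assoc]

theorem pairPerm_one_b_mul_c_mul_d : pairPerm 1 (b * c * d) = d * (a * b * a) * c := by
  rw [show d * (a * b * a) * c = pairPerm 1 1 * d * (a * b * a) * c by simp]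
  simp only [pairPerm_mul_c, pairPerm_mul_d, pairPerm_mul_aba]
  simp [mul_assoc]

end pairPerm

section decomposition

theorem exists_pairPerm_of_mem_G {g : Perm V} (hg : g ∈ G) :
    ∃ g₀ ∈ G, ∃ g₁ ∈ G, g = pairPerm g₀ g₁ ∨ g = pairPerm g₀ g₁ * a := by
  let P (y : Perm V) : Prop := ∃ g₀ ∈ G, ∃ g₁ ∈ G, y = pairPerm g₀ g₁ ∨ y = pairPerm g₀ g₁ * a
  have a_mul : ∀ y, P y → P (a * y) := by
    rintro y ⟨y₀, hy₀, y₁, hy₁, rfl | rfl⟩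
    · exact ⟨y₁, hy₁, y₀, hy₀, Or.inr (a_mul_pairPerm ..)⟩
    · exact ⟨y₁, hy₁, y₀, hy₀, Or.inl (by rw [← mul_assoc, a_mul_pairPerm_mul_a])⟩
  have pairPerm_mul_mem : ∀ s ∈ G, ∀ t ∈ G, ∀ y, P y → P (pairPerm s t * y) := by
    rintro s hs t ht y ⟨y₀, hy₀, y₁, hy₁, rfl | rfl⟩
    · exact ⟨_, mul_mem hs hy₀, _, mul_mem ht hy₁, Or.inl (pairPerm_mul ..)⟩
    · exact ⟨_, mul_mem hs hy₀, _, mul_mem ht hy₁, Or.inr (by rw [← mul_assoc, pairPerm_mul])⟩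
  have gen_mul : ∀ x ∈ ({a, b, c, d} : Set (Perm V)), ∀ y, P y → P (x * y) := by
    rintro x (rfl | rfl | rfl | rfl)
    · exact a_mul
    · rw [b_eq_pairPerm]; exact pairPerm_mul_mem c c_mem_G a a_mem_G
    · rw [c_eq_pairPerm]; exact pairPerm_mul_mem a a_mem_G d d_mem_G
    · rw [d_eq_pairPerm]; exact pairPerm_mul_mem 1 (one_mem G) b b_mem_G
  induction hg using Subgroup.closure_induction_left with
  | one => exact ⟨1, one_mem G, 1, one_mem G, Or.inl pairPerm_one.symm⟩
  | mul_left x hx y _ ih => exact gen_mul x hx y ih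
  | inv_mul_cancel x hx y _ ih =>
    rcases hx with rfl | rfl | rfl | rfl <;> simpa using gen_mul _ (by simp) y ih

theorem exists_pairPerm_of_mem_G_of_apply_cons_false {g : Perm V} (hg : g ∈ G) {w : V}
    (hfix : g (false :: w) = false :: w) : ∃ g₀ ∈ G, ∃ g₁ ∈ G, g = pairPerm g₀ g₁ := by
  obtain ⟨g₀, hg₀, g₁, hg₁, rfl | rfl⟩ := exists_pairPerm_of_mem_G hg
  · exact ⟨g₀, hg₀, g₁, hg₁, rfl⟩
  · simp [actA] at hfix

theorem exists_pairPerm_mem_G {g : Perm V} (hg : g ∈ G) : ∃ h ∈ G, pairPerm h g ∈ G := by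
  have gen : ∀ x ∈ ({a, b, c, d} : Set (Perm V)), ∃ h ∈ G, pairPerm h x ∈ G := by
    rintro x (rfl | rfl | rfl | rfl)
    · exact ⟨d, d_mem_G, by
        rw [← a_mul_pairPerm_mul_a, ← c_eq_pairPerm]
        exact mul_mem (mul_mem a_mem_G c_mem_G) a_mem_G⟩
    · exact ⟨1, one_mem G, d_eq_pairPerm ▸ d_mem_G⟩
    · exact ⟨a, a_mem_G, by
        rw [← a_mul_pairPerm_mul_a, ← b_eq_pairPerm]
        exact mul_mem (mul_mem a_mem_G b_mem_G) a_mem_G⟩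
    · exact ⟨a, a_mem_G, c_eq_pairPerm ▸ c_mem_G⟩
  have gen_mul : ∀ x ∈ ({a, b, c, d} : Set (Perm V)), ∀ y, (∃ h ∈ G, pairPerm h y ∈ G) →
      ∃ h ∈ G, pairPerm h (x * y) ∈ G := by
    rintro x hx y ⟨h, hh, hy⟩
    obtain ⟨hₓ, hhₓ, hx⟩ := gen x hx
    exact ⟨hₓ * h, mul_mem hhₓ hh, pairPerm_mul hₓ x h y ▸ mul_mem hx hy⟩
  induction hg using Subgroup.closure_induction_left with
  | one => exact ⟨1, one_mem G, by simp [one_mem]⟩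
  | mul_left x hx y _ ih => exact gen_mul x hx y ih
  | inv_mul_cancel x hx y _ ih =>
    rcases hx with rfl | rfl | rfl | rfl <;> simpa using gen_mul _ (by simp) y ih

end decomposition

section normalClosure

theorem subset_ncl (S : Set (Perm V)) : S ⊆ ncl S := fun s hs =>
  Subgroup.subset_closure ⟨s, hs, 1, one_mem G, by simp⟩

theorem ncl_le {S : Set (Perm V)} {H : Subgroup (Perm V)} (hS : S ⊆ H)
    (hG : G ≤ Subgroup.normalizer H) : ncl S ≤ H := by
  refine (Subgroup.closure_le H).mpr ?_
  rintro _ ⟨s, hs, g, hg, rfl⟩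
  exact (Subgroup.mem_normalizer_iff''.mp (hG hg) s).mp (hS hs)

theorem conj_mem_ncl {S : Set (Perm V)} {g k : Perm V} (hg : g ∈ G) (hk : k ∈ ncl S) :
    g⁻¹ * k * g ∈ ncl S := by
  induction hk using Subgroup.closure_induction with
  | mem x hx =>
    obtain ⟨s, hs, h, hh, rfl⟩ := hx
    exact Subgroup.subset_closure ⟨s, hs, h * g, mul_mem hh hg, by group⟩
  | one => simp [one_mem]
  | mul x y _ _ hx hy => simpa [mul_assoc] using mul_mem hx hy
  | inv x _ hx => simpa [mul_assoc] using inv_mem hx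

theorem G_le_normalizer_ncl (S : Set (Perm V)) : G ≤ Subgroup.normalizer (ncl S) := fun g hg =>
  Subgroup.mem_normalizer_iff''.mpr fun k =>
    ⟨conj_mem_ncl hg, fun hk => by simpa [mul_assoc] using conj_mem_ncl (inv_mem hg) hk⟩

end normalClosure

theorem pc_mem_G {x y : Perm V} (hx : x ∈ G) (hy : y ∈ G) : pc x y ∈ G :=
  mul_mem (mul_mem (mul_mem (inv_mem hx) (inv_mem hy)) hx) hy

instance : (K.subgroupOf G).Normal :=
  ⟨fun n hn g => (Subgroup.mem_normalizer_iff.mp (G_le_normalizer_ncl _ g.2) n).mp hn⟩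

local notation "ā" => ((Subtype.mk a a_mem_G : G) : G ⧸ K.subgroupOf G)
local notation "b̄" => ((Subtype.mk b b_mem_G : G) : G ⧸ K.subgroupOf G)
local notation "c̄" => ((Subtype.mk c c_mem_G : G) : G ⧸ K.subgroupOf G)
local notation "d̄" => ((Subtype.mk d d_mem_G : G) : G ⧸ K.subgroupOf G)

section quotient

theorem mk_eq_one_iff {g : Perm V} (hg : g ∈ G) :
    ((⟨g, hg⟩ : G) : G ⧸ K.subgroupOf G) = 1 ↔ g ∈ K := by
  rw [QuotientGroup.eq_one_iff, Subgroup.mem_subgroupOf]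

theorem pc_mem_K_iff {x y : Perm V} (hx : x ∈ G) (hy : y ∈ G) :
    pc x y ∈ K ↔ Commute ((⟨x, hx⟩ : G) : G ⧸ K.subgroupOf G) (⟨y, hy⟩ : G) := by
  rw [← mk_eq_one_iff (pc_mem_G hx hy), ← Commute.inv_inv_iff,
    ← commutatorElement_eq_one_iff_commute, commutatorElement_def, inv_inv, inv_inv]
  rfl

theorem mk_mul_self {x : Perm V} (hx : x ∈ G) (h : x * x = 1) :
    ((⟨x, hx⟩ : G) : G ⧸ K.subgroupOf G) * (⟨x, hx⟩ : G) = 1 :=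
  (mk_eq_one_iff (mul_mem hx hx)).mpr (h ▸ one_mem K)

theorem commute_b_a : Commute b̄ ā :=
  ((pc_mem_K_iff a_mem_G b_mem_G).mp (subset_ncl _ (by simp))).symm

theorem commute_b_c : Commute b̄ c̄ :=
  (pc_mem_K_iff b_mem_G c_mem_G).mp (subset_ncl _ (by simp))

theorem mk_d : d̄ = b̄ * c̄ := by
  have hbcd : b̄ * c̄ * d̄ = 1 :=
    (mk_eq_one_iff (mul_mem (mul_mem b_mem_G c_mem_G) d_mem_G)).mpr (subset_ncl _ (by simp))
  rw [eq_inv_of_mul_eq_one_right hbcd, mul_inv_rev, commute_b_c.eq,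
    inv_eq_of_mul_eq_one_right (mk_mul_self b_mem_G b_mul_self),
    inv_eq_of_mul_eq_one_right (mk_mul_self c_mem_G c_mul_self)]

theorem mk_a_mul_b_mul_a : ā * b̄ * ā = b̄ := by
  rw [← commute_b_a.eq, mul_assoc, mk_mul_self a_mem_G a_mul_self, mul_one]

end quotient

section branching

theorem pairPerm_one_mem_K {s : Perm V}
    (hs : s ∈ ({pc a b, pc b c, pc b d, pc c d, b * c * d} : Set (Perm V))) :
    pairPerm 1 s ∈ K := by
  have aba_mem_G : a * b * a ∈ G := mul_mem (mul_mem a_mem_G b_mem_G) a_mem_G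
  rcases hs with rfl | rfl | rfl | rfl | rfl
  · rw [pairPerm_one_pc_a_b]
    exact subset_ncl _ (by simp)
  · rw [pairPerm_one_pc_b_c, pc_mem_K_iff d_mem_G aba_mem_G]
    change Commute d̄ (ā * b̄ * ā)
    rw [mk_a_mul_b_mul_a, mk_d]
    exact (Commute.refl b̄).mul_left commute_b_c.symm
  · rw [pairPerm_one_pc_b_d, pc_mem_K_iff d_mem_G c_mem_G]
    rw [mk_d]
    exact commute_b_c.mul_left (Commute.refl c̄)
  · rw [pairPerm_one_pc_c_d, pc_mem_K_iff aba_mem_G c_mem_G]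
    change Commute (ā * b̄ * ā) c̄
    rw [mk_a_mul_b_mul_a]
    exact commute_b_c
  · rw [pairPerm_one_b_mul_c_mul_d, ← mk_eq_one_iff (mul_mem (mul_mem d_mem_G aba_mem_G) c_mem_G)]
    change d̄ * (ā * b̄ * ā) * c̄ = 1
    rw [mk_a_mul_b_mul_a, mk_d, commute_b_c.eq, mul_assoc c̄, mk_mul_self b_mem_G b_mul_self,
      mul_one, mk_mul_self c_mem_G c_mul_self]

theorem K_le_comap_vstar_true : K ≤ K.comap (vstarHom [true]) := by
  refine ncl_le (fun s hs => ?_) fun g hg => ?_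
  · change vstar [true] s ∈ K
    rw [vstar_true]
    exact pairPerm_one_mem_K hs
  · obtain ⟨h, hh, hhg⟩ := exists_pairPerm_mem_G hg
    refine Subgroup.mem_normalizer_iff.mpr fun n => ?_
    change vstar [true] n ∈ K ↔ vstar [true] (g * n * g⁻¹) ∈ K
    have hconj : vstar [true] (g * n * g⁻¹) = pairPerm h g * vstar [true] n * (pairPerm h g)⁻¹ := by
      simp [vstar_true, pairPerm_mul, pairPerm_inv]
    rw [hconj]
    exact Subgroup.mem_normalizer_iff.mp (G_le_normalizer_ncl _ hhg) _

theorem vstar_mem_K {k : Perm V} (hk : k ∈ K) (x : Bool) : vstar [x] k ∈ K := by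
  cases x
  · rw [vstar_false, ← a_mul_pairPerm_mul_a, ← vstar_true, ← a_inv]
    exact (Subgroup.mem_normalizer_iff.mp (G_le_normalizer_ncl _ a_mem_G) _).mp
      (K_le_comap_vstar_true hk)
  · exact K_le_comap_vstar_true hk

theorem XstarSub_one_K_le_K : XstarSub 1 K ≤ K :=
  (Subgroup.closure_le K).mpr <| by
    rintro _ ⟨v, g, hv, hg, rfl⟩
    obtain ⟨x, rfl⟩ := List.length_eq_one_iff.mp hv
    exact vstar_mem_K hg x

theorem pairPerm_mem_K {k₀ k₁ : Perm V} (h₀ : k₀ ∈ K) (h₁ : k₁ ∈ K) : pairPerm k₀ k₁ ∈ K :=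
  mul_mem (vstar_mem_K h₀ false) (vstar_mem_K h₁ true)

end branching

theorem mul_mul_self_of_commute {Q : Type*} [Group Q] {z x : Q} (hz : z * z = 1)
    (h : Commute z x) : z * x * (z * x) = x * x := by
  rw [h.symm.mul_mul_mul_comm, hz, one_mul]

theorem a_mul_c_pow_four_mem_K : (a * c) ^ 4 ∈ K := by
  have hb : b̄ * b̄ = 1 := mk_mul_self b_mem_G b_mul_self
  have k₀ : ((c * a) * (c * a))⁻¹ * ((d * a) * (d * a)) ∈ K := by
    refine (mk_eq_one_iff (by apply_rules [mul_mem, inv_mem, a_mem_G, c_mem_G, d_mem_G])).mp ?_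
    change (c̄ * ā * (c̄ * ā))⁻¹ * (d̄ * ā * (d̄ * ā)) = 1
    rw [show d̄ * ā = b̄ * (c̄ * ā) by rw [mk_d, mul_assoc],
      mul_mul_self_of_commute hb (commute_b_c.mul_right commute_b_a), inv_mul_cancel]
  have k₁ : ((a * c) * (a * c))⁻¹ * ((a * d) * (a * d)) ∈ K := by
    refine (mk_eq_one_iff (by apply_rules [mul_mem, inv_mem, a_mem_G, c_mem_G, d_mem_G])).mp ?_
    change (ā * c̄ * (ā * c̄))⁻¹ * (ā * d̄ * (ā * d̄)) = 1
    rw [show ā * d̄ = b̄ * (ā * c̄) by rw [mk_d, ← mul_assoc, ← commute_b_a.eq, mul_assoc],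
      mul_mul_self_of_commute hb (commute_b_a.mul_right commute_b_c), inv_mul_cancel]
  have hψ : (a * c) ^ 4 = a * (pc a b * pc a b) * a⁻¹ *
      pairPerm (((c * a) * (c * a))⁻¹ * ((d * a) * (d * a)))
        (((a * c) * (a * c))⁻¹ * ((a * d) * (a * d))) := by
    rw [show (a * c) ^ 4 = (a * c) ^ 2 * (a * c) ^ 2 by group, a_mul_c_sq, pc_a_b_eq, a_inv]
    simp only [pairPerm_mul, a_mul_pairPerm_mul_a]
    congr 1 <;> group
  rw [hψ]
  refine mul_mem ?_ (pairPerm_mem_K k₀ k₁)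
  exact (Subgroup.mem_normalizer_iff.mp (G_le_normalizer_ncl _ a_mem_G) _).mp
    (mul_mem (subset_ncl _ (by simp)) (subset_ncl _ (by simp)))

section normalForm

variable {Q : Type*} [Group Q] {s t z : Q}

theorem mul_mul_zpow_eq_zpow_neg_mul (hs : s * s = 1) (ht : t * t = 1) (k : ℤ) :
    s * (s * t) ^ k = (s * t) ^ (-k) * s := by
  have h : SemiconjBy s (s * t) (s * t)⁻¹ := by
    rw [SemiconjBy, ← mul_assoc, hs, one_mul, mul_inv_rev, inv_mul_cancel_right,
      inv_eq_of_mul_eq_one_right ht]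
  rw [(h.zpow_right k).eq, inv_zpow']

theorem exists_eq_pow_mul_zpow_mul_pow (hs : s * s = 1) (ht : t * t = 1) (hz : z * z = 1)
    (hzs : Commute z s) (hzt : Commute z t) {q : Q} (hq : q ∈ Subgroup.closure {s, t, z}) :
    ∃ (δ : ℕ) (k : ℤ) (ε : ℕ), q = z ^ δ * (s * t) ^ k * s ^ ε := by
  let P (y : Q) : Prop := ∃ (δ : ℕ) (k : ℤ) (ε : ℕ), y = z ^ δ * (s * t) ^ k * s ^ ε
  have s_mul : ∀ y, P y → P (s * y) := by
    rintro _ ⟨δ, k, ε, rfl⟩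
    refine ⟨δ, -k, ε + 1, ?_⟩
    rw [pow_succ', ← mul_assoc, ← mul_assoc, ← (hzs.pow_left δ).eq, mul_assoc _ s,
      mul_mul_zpow_eq_zpow_neg_mul hs ht]
    simp only [mul_assoc]
  have st_mul : ∀ y, P y → P (s * t * y) := by
    rintro _ ⟨δ, k, ε, rfl⟩
    refine ⟨δ, 1 + k, ε, ?_⟩
    rw [← mul_assoc, ← mul_assoc, ← ((hzs.mul_right hzt).pow_left δ).eq, zpow_one_add]
    simp only [mul_assoc]
  have z_mul : ∀ y, P y → P (z * y) := by
    rintro _ ⟨δ, k, ε, rfl⟩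
    exact ⟨δ + 1, k, ε, by simp only [pow_succ', mul_assoc]⟩
  have gen_mul : ∀ x ∈ ({s, t, z} : Set Q), ∀ y, P y → P (x * y) := by
    rintro x (rfl | rfl | rfl) y hy
    · exact s_mul y hy
    · rw [show x = s * (s * x) by rw [← mul_assoc, hs, one_mul], mul_assoc]
      exact s_mul _ (st_mul y hy)
    · exact z_mul y hy
  induction hq using Subgroup.closure_induction_left with
  | one => exact ⟨0, 0, 0, by simp⟩
  | mul_left x hx y _ ih => exact gen_mul x hx y ih
  | inv_mul_cancel x hx y _ ih =>
    have hx' : x⁻¹ = x := by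
      rcases hx with rfl | rfl | rfl
      exacts [inv_eq_of_mul_eq_one_right hs, inv_eq_of_mul_eq_one_right ht,
        inv_eq_of_mul_eq_one_right hz]
    rw [hx']
    exact gen_mul x hx y ih

theorem exists_lt_eq_pow_mul_pow_mul_pow (hs : s * s = 1) (ht : t * t = 1) (hz : z * z = 1)
    (hzs : Commute z s) (hzt : Commute z t) (hst : (s * t) ^ 4 = 1) {q : Q}
    (hq : q ∈ Subgroup.closure {s, t, z}) :
    ∃ δ < 2, ∃ k < 4, ∃ ε < 2, q = z ^ δ * (s * t) ^ k * s ^ ε := by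
  obtain ⟨δ, k, ε, rfl⟩ := exists_eq_pow_mul_zpow_mul_pow hs ht hz hzs hzt hq
  have hk : (k % 4).toNat < 4 := by omega
  refine ⟨δ % 2, Nat.mod_lt _ two_pos, (k % 4).toNat, hk, ε % 2, Nat.mod_lt _ two_pos, ?_⟩
  rw [← pow_eq_pow_mod δ (by rwa [sq]), ← pow_eq_pow_mod ε (by rwa [sq]),
    ← zpow_natCast (s * t), Int.toNat_of_nonneg (Int.emod_nonneg k (by norm_num))]
  exact_mod_cast congrArg (z ^ δ * · * s ^ ε) (zpow_eq_zpow_emod' k hst)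

end normalForm

section cosets

theorem mk_mem_closure {g : Perm V} (hg : g ∈ G) :
    ((⟨g, hg⟩ : G) : G ⧸ K.subgroupOf G) ∈ Subgroup.closure {ā, c̄, b̄} := by
  induction hg using Subgroup.closure_induction with
  | mem x hx =>
    rcases hx with rfl | rfl | rfl | rfl
    iterate 3 exact Subgroup.subset_closure (by simp)
    rw [mk_d]
    exact mul_mem (Subgroup.subset_closure (by simp)) (Subgroup.subset_closure (by simp))
  | one => exact one_mem _
  | mul x y _ _ hx hy => exact mul_mem hx hy
  | inv x _ hx => exact inv_mem hx

theorem exists_inv_mul_mem_K {g : Perm V} (hg : g ∈ G) :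
    ∃ δ < 2, ∃ k < 4, ∃ ε < 2, (b ^ δ * (a * c) ^ k * a ^ ε)⁻¹ * g ∈ K := by
  have hac : ((Subtype.mk a a_mem_G * Subtype.mk c c_mem_G : G) : G ⧸ K.subgroupOf G) ^ 4 = 1 :=
    (mk_eq_one_iff (pow_mem (mul_mem a_mem_G c_mem_G) 4)).mpr a_mul_c_pow_four_mem_K
  obtain ⟨δ, hδ, k, hk, ε, hε, h⟩ := exists_lt_eq_pow_mul_pow_mul_pow
    (mk_mul_self a_mem_G a_mul_self) (mk_mul_self c_mem_G c_mul_self)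
    (mk_mul_self b_mem_G b_mul_self) commute_b_a commute_b_c hac (mk_mem_closure hg)
  refine ⟨δ, hδ, k, hk, ε, hε, ?_⟩
  have hrep : ((Subtype.mk b b_mem_G ^ δ * (Subtype.mk a a_mem_G * Subtype.mk c c_mem_G) ^ k *
      Subtype.mk a a_mem_G ^ ε : G) : G ⧸ K.subgroupOf G) = (⟨g, hg⟩ : G) := by
    rw [h]
    rfl
  simpa [Subgroup.mem_subgroupOf] using QuotientGroup.eq.mp hrep

end cosets

section level3

def AgreeOnLevel3 (g h : Perm V) : Prop := ∀ v : V, v.length = 3 → g v = h v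

instance : DecidableRel AgreeOnLevel3 := fun g h =>
  decidable_of_iff (∀ x y z : Bool, g [x, y, z] = h [x, y, z]) <| by
    refine ⟨fun H v hv => ?_, fun H x y z => H _ rfl⟩
    match v, hv with
    | [x, y, z], _ => exact H x y z

theorem AgreeOnLevel3.refl (g : Perm V) : AgreeOnLevel3 g g := fun _ _ => rfl

theorem AgreeOnLevel3.trans {g h k : Perm V} (hgh : AgreeOnLevel3 g h) (hhk : AgreeOnLevel3 h k) :
    AgreeOnLevel3 g k := fun v hv => (hgh v hv).trans (hhk v hv)

theorem AgreeOnLevel3.mul {g g' h h' : Perm V} (hg : AgreeOnLevel3 g h) (hg' : AgreeOnLevel3 g' h')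
    (hh' : h' ∈ G) : AgreeOnLevel3 (g * g') (h * h') := fun v hv => by
  rw [Perm.mul_apply, Perm.mul_apply, hg' v hv, hg _ (by rw [length_apply_of_mem_G hh', hv])]

theorem AgreeOnLevel3.inv {g h : Perm V} (hgh : AgreeOnLevel3 g h) (hh : h ∈ G) :
    AgreeOnLevel3 g⁻¹ h⁻¹ := fun v hv => by
  rw [Perm.inv_eq_iff_eq, hgh _ (by rw [length_apply_of_mem_G (inv_mem hh), hv])]
  simp

def kRep (i : Fin 4) (j : Fin 2) : Perm V := pc a b ^ (i : ℕ) * pc b d ^ (j : ℕ)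

theorem kRep_mem_G (i : Fin 4) (j : Fin 2) : kRep i j ∈ G :=
  mul_mem (pow_mem (pc_mem_G a_mem_G b_mem_G) _) (pow_mem (pc_mem_G b_mem_G d_mem_G) _)

theorem kRep_mul :
    ∀ i j i' j', ∃ i'' j'', AgreeOnLevel3 (kRep i j * kRep i' j') (kRep i'' j'') := by
  decide

theorem kRep_inv : ∀ i j, ∃ i' j', AgreeOnLevel3 (kRep i j)⁻¹ (kRep i' j') := by
  decide

theorem kRep_conj : ∀ i j,
    (∃ i' j', AgreeOnLevel3 (a * kRep i j * a) (kRep i' j')) ∧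
    (∃ i' j', AgreeOnLevel3 (b * kRep i j * b) (kRep i' j')) ∧
    (∃ i' j', AgreeOnLevel3 (c * kRep i j * c) (kRep i' j')) ∧
    (∃ i' j', AgreeOnLevel3 (d * kRep i j * d) (kRep i' j')) := by
  decide

def level3K : Subgroup (Perm V) where
  carrier := {g | ∃ i j, AgreeOnLevel3 g (kRep i j)}
  one_mem' := ⟨0, 0, by decide⟩
  mul_mem' := by
    rintro g g' ⟨i, j, hg⟩ ⟨i', j', hg'⟩
    obtain ⟨i'', j'', h⟩ := kRep_mul i j i' j'
    exact ⟨i'', j'', (hg.mul hg' (kRep_mem_G i' j')).trans h⟩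
  inv_mem' := by
    rintro g ⟨i, j, hg⟩
    obtain ⟨i', j', h⟩ := kRep_inv i j
    exact ⟨i', j', (hg.inv (kRep_mem_G i j)).trans h⟩

theorem mem_normalizer_of_mul_self {Q : Type*} [Group Q] {H : Subgroup Q} {x : Q}
    (hx : x * x = 1) (h : ∀ n ∈ H, x * n * x ∈ H) : x ∈ Subgroup.normalizer H := by
  have hx' : x⁻¹ = x := inv_eq_of_mul_eq_one_right hx
  refine Subgroup.mem_normalizer_iff.mpr fun n => ⟨fun hn => by simpa [hx'] using h n hn,
    fun hn => ?_⟩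
  rw [hx'] at hn
  simpa [mul_assoc, hx, ← mul_assoc x x] using h _ hn

theorem mul_mul_mem_level3K {x : Perm V} (hx : x ∈ G)
    (hconj : ∀ i j, ∃ i' j', AgreeOnLevel3 (x * kRep i j * x) (kRep i' j')) :
    ∀ n ∈ level3K, x * n * x ∈ level3K := by
  rintro n ⟨i, j, hn⟩
  obtain ⟨i', j', h⟩ := hconj i j
  exact ⟨i', j', (((AgreeOnLevel3.refl x).mul hn (kRep_mem_G i j)).mul (.refl x) hx).trans h⟩

theorem G_le_normalizer_level3K : G ≤ Subgroup.normalizer level3K := by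
  refine (Subgroup.closure_le _).mpr ?_
  rintro x (rfl | rfl | rfl | rfl)
  · exact mem_normalizer_of_mul_self a_mul_self
      (mul_mul_mem_level3K a_mem_G fun i j => (kRep_conj i j).1)
  · exact mem_normalizer_of_mul_self b_mul_self
      (mul_mul_mem_level3K b_mem_G fun i j => (kRep_conj i j).2.1)
  · exact mem_normalizer_of_mul_self c_mul_self
      (mul_mul_mem_level3K c_mem_G fun i j => (kRep_conj i j).2.2.1)
  · exact mem_normalizer_of_mul_self d_mul_self
      (mul_mul_mem_level3K d_mem_G fun i j => (kRep_conj i j).2.2.2)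

theorem K_le_level3K : K ≤ level3K := by
  refine ncl_le ?_ G_le_normalizer_level3K
  rintro _ (rfl | rfl | rfl | rfl | rfl)
  all_goals
    show ∃ i j, AgreeOnLevel3 _ (kRep i j)
    decide

theorem eq_zero_of_agreeOnLevel3_cosetRep_mul_kRep :
    ∀ (δ : Fin 2) (k : Fin 4) (ε : Fin 2) (i : Fin 4) (j : Fin 2),
      AgreeOnLevel3 (b ^ (δ : ℕ) * (a * c) ^ (k : ℕ) * a ^ (ε : ℕ) * kRep i j) 1 →
        δ = 0 ∧ k = 0 ∧ ε = 0 := by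
  decide

end level3

theorem stabG_three_le_K : stabG 3 ≤ K := by
  rintro g ⟨hg, hfix⟩
  obtain ⟨δ, hδ, k, hk, ε, hε, hK⟩ := exists_inv_mul_mem_K hg
  obtain ⟨i, j, hij⟩ := K_le_level3K hK
  have hrep : AgreeOnLevel3 (b ^ δ * (a * c) ^ k * a ^ ε * kRep i j) 1 := fun v hv => by
    rw [Perm.mul_apply, ← hij v hv]
    simpa using hfix v hv
  obtain ⟨hδ0, hk0, hε0⟩ :=
    eq_zero_of_agreeOnLevel3_cosetRep_mul_kRep ⟨δ, hδ⟩ ⟨k, hk⟩ ⟨ε, hε⟩ i j hrep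
  simp only [Fin.ext_iff, Fin.val_zero] at hδ0 hk0 hε0
  simpa [hδ0, hk0, hε0] using hK

section finiteIndex

def levelPerm (n : ℕ) : G →* Perm (List.Vector Bool n) where
  toFun g := (g : Perm V).subtypePerm fun v => by rw [length_apply_of_mem_G g.2]
  map_one' := rfl
  map_mul' _ _ := rfl

theorem stabLevel_subgroupOf_eq_ker (n : ℕ) : (stabLevel n).subgroupOf G = (levelPerm n).ker := by
  ext g
  simp only [Subgroup.mem_subgroupOf, MonoidHom.mem_ker, Equiv.ext_iff]
  exact ⟨fun h v => Subtype.ext (h v.1 v.2), fun h v hv => congrArg Subtype.val (h ⟨v, hv⟩)⟩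

theorem relIndex_stabG_ne_zero (n : ℕ) : (stabG n).relIndex G ≠ 0 := by
  rw [stabG, Subgroup.inf_relIndex_left, Subgroup.relIndex, stabLevel_subgroupOf_eq_ker,
    Subgroup.index_ker]
  exact Nat.card_ne_zero.mpr ⟨⟨1, one_mem _⟩, inferInstance⟩

theorem XstarSub_le_comap_vstar (n : ℕ) (x : Bool) :
    XstarSub n K ≤ (XstarSub (n + 1) K).comap (vstarHom [x]) :=
  (Subgroup.closure_le _).mpr <| by
    rintro _ ⟨v, k, hv, hk, rfl⟩
    change vstar [x] (vstar v k) ∈ XstarSub (n + 1) K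
    rw [← vstar_cons]
    exact Subgroup.subset_closure ⟨x :: v, k, by simp [hv], hk, rfl⟩

theorem stabG_add_three_le_XstarSub (n : ℕ) : stabG (n + 3) ≤ XstarSub n K := by
  induction n with
  | zero =>
    refine stabG_three_le_K.trans fun k hk => Subgroup.subset_closure ⟨[], k, rfl, hk, ?_⟩
    exact (vstar_nil k).symm
  | succ n ih =>
    rintro g ⟨hg, hfix⟩
    obtain ⟨g₀, hg₀, g₁, hg₁, rfl⟩ := exists_pairPerm_of_mem_G_of_apply_cons_false hg
      (hfix (false :: .replicate (n + 3) false) (by simp))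
    have h₀ : g₀ ∈ stabG (n + 3) :=
      ⟨hg₀, fun w hw => by simpa using hfix (false :: w) (by simp [hw])⟩
    have h₁ : g₁ ∈ stabG (n + 3) :=
      ⟨hg₁, fun w hw => by simpa using hfix (true :: w) (by simp [hw])⟩
    exact mul_mem (XstarSub_le_comap_vstar n false (ih h₀))
      (XstarSub_le_comap_vstar n true (ih h₁))

theorem relIndex_XstarSub_ne_zero (n : ℕ) : (XstarSub n K).relIndex G ≠ 0 := fun h =>
  relIndex_stabG_ne_zero (n + 3) <|
    Nat.eq_zero_of_zero_dvd (h ▸ Subgroup.relIndex_dvd_of_le_left G (stabG_add_three_le_XstarSub n))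

end finiteIndex

/-- **Proposition.** `G` is regular branch over `K`: `X*K ≤ K` and `Xⁿ*K` has finite
index in `G` for every `n ≥ 0`; moreover `K` contains `Stab_G(3)`. -/
theorem stmt0 :
    XstarSub 1 K ≤ K ∧ (∀ n : ℕ, (XstarSub n K).relIndex G ≠ 0) ∧ stabG 3 ≤ K :=
  ⟨XstarSub_one_K_le_K, relIndex_XstarSub_ne_zero, stabG_three_le_K⟩
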